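/- Let p ∈ (0,1), let K be a p-core CRG, and let x be a nonnegative weight vector summing to 1 attaining the minimum g_K(p). Then for every vertex v of K, g_K(p) = p·d_W(v) + (1−p)·d_B(v). -/

import Mathlib

/-- Colors for edges of a colored regularity graph. -/
inductive EColor : Type
  | white
  | gray
  | black
deriving DecidableEq

/-- A colored regularity graph (CRG) on a finite vertex type `V`: each vertex is
white or black (`vWhite v = true` means white), and each pair of distinct vertices
gets a symmetric edge color (white, gray or black). -/
structure CRG (V : Type) [Fintype V] where
  vWhite : V → Bool
  ecolor : V → V → EColor
  ecolor_symm : ∀ u v, ecolor u v = ecolor v u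

namespace CRG

variable {V : Type} [Fintype V] [DecidableEq V]

/-- The matrix `M_K(p)`. -/
noncomputable def M (K : CRG V) (p : ℝ) (u v : V) : ℝ :=
  if u = v then (if K.vWhite u then p else 1 - p)
  else
    match K.ecolor u v with
    | EColor.white => p
    | EColor.black => 1 - p
    | EColor.gray => 0

/-- The function `g_K(p)`: the minimum of `xᵀ M_K(p) x` over nonnegative weight
vectors summing to `1`. -/
noncomputable def g (K : CRG V) (p : ℝ) : ℝ :=
  sInf {r : ℝ | ∃ x : V → ℝ, (∀ v, 0 ≤ x v) ∧ (∑ v, x v) = 1 ∧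
    r = ∑ u, ∑ v, x u * K.M p u v * x v}

/-- The sub-CRG induced on a subset `s` of the vertices. -/
def sub (K : CRG V) (s : Finset V) : CRG {v // v ∈ s} where
  vWhite := fun v => K.vWhite v.1
  ecolor := fun u v => K.ecolor u.1 v.1
  ecolor_symm := fun u v => K.ecolor_symm u.1 v.1

/-- `K` is `p`-core if `g_K(p) < g_{K'}(p)` for every proper (nonempty) sub-CRG `K'`. -/
def IsPCore (K : CRG V) (p : ℝ) : Prop :=
  ∀ s : Finset V, s.Nonempty → s ≠ Finset.univ → K.g p < (K.sub s).g p

/-- `x` is an optimal weight vector for `K` at `p`. -/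
def IsOptWeight (K : CRG V) (p : ℝ) (x : V → ℝ) : Prop :=
  (∀ v, 0 ≤ x v) ∧ (∑ v, x v) = 1 ∧
    (∑ u, ∑ v, x u * K.M p u v * x v) = K.g p

/-- The gray degree `d_G(v)`: total weight of gray neighbors of `v`. -/
noncomputable def dG (K : CRG V) (x : V → ℝ) (v : V) : ℝ :=
  ∑ w ∈ Finset.univ.filter fun w => w ≠ v ∧ K.ecolor v w = EColor.gray, x w

/-- The white degree `d_W(v)`: total weight of white neighbors of `v`, including `v`
itself if `v` is white. -/
noncomputable def dW (K : CRG V) (x : V → ℝ) (v : V) : ℝ :=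
  (∑ w ∈ Finset.univ.filter fun w => w ≠ v ∧ K.ecolor v w = EColor.white, x w) +
    (if K.vWhite v then x v else 0)

/-- The black degree `d_B(v)`: total weight of black neighbors of `v`, including `v`
itself if `v` is black. -/
noncomputable def dB (K : CRG V) (x : V → ℝ) (v : V) : ℝ :=
  (∑ w ∈ Finset.univ.filter fun w => w ≠ v ∧ K.ecolor v w = EColor.black, x w) +
    (if K.vWhite v then 0 else x v)

/-- The number of gray neighbors of `v`. -/
def grayDeg (K : CRG V) (v : V) : ℕ :=
  (Finset.univ.filter fun w => w ≠ v ∧ K.ecolor v w = EColor.gray).card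

end CRG

/-- A graph `H` embeds in a CRG `K`, written `H ↦ K`. -/
def EmbedsIn {α : Type*} {V : Type} [Fintype V] (H : SimpleGraph α) (K : CRG V) : Prop :=
  ∃ φ : α → V,
    (∀ a b : α, H.Adj a b →
      (φ a = φ b ∧ K.vWhite (φ a) = false) ∨
      (φ a ≠ φ b ∧ (K.ecolor (φ a) (φ b) = EColor.black ∨ K.ecolor (φ a) (φ b) = EColor.gray))) ∧
    (∀ a b : α, a ≠ b → ¬H.Adj a b →
      (φ a = φ b ∧ K.vWhite (φ a) = true) ∨
      (φ a ≠ φ b ∧ (K.ecolor (φ a) (φ b) = EColor.white ∨ K.ecolor (φ a) (φ b) = EColor.gray)))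

/-!
An optimal weight vector `x` minimises the quadratic form `y ↦ yᵀ M y` on the standard simplex.
Moving from `x` towards a vertex `e_v` of the simplex cannot decrease the form, which gives the
first-order condition `(M x)_v ≥ xᵀ M x = g`. Since `xᵀ M x` is the `x`-weighted average of the
`(M x)_v`, equality holds wherever `x_v > 0`, and in a `p`-core CRG every `x_v` is positive:
otherwise `x` restricted to its support would show that `g` of a proper sub-CRG is at most `g`.
Finally `(M x)_v = p d_W(v) + (1 - p) d_B(v)` by reading off row `v` of `M`.
-/

open Filter Topology in
theorem nonneg_of_forall_Ioc_nonneg_add_mul {b c : ℝ}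
    (h : ∀ t ∈ Set.Ioc (0 : ℝ) 1, 0 ≤ b + t * c) : 0 ≤ b := by
  have hlim : Tendsto (fun t : ℝ => b + t * c) (𝓝[>] 0) (𝓝 b) := by
    have hcont : Continuous fun t : ℝ => b + t * c := by fun_prop
    simpa using (hcont.tendsto 0).mono_left nhdsWithin_le_nhds
  refine ge_of_tendsto hlim ?_
  filter_upwards [Ioc_mem_nhdsGT one_pos] with t ht using h t ht

namespace Matrix

open Finset

variable {V : Type*} [Fintype V] {A : Matrix V V ℝ}

theorem IsSymm.dotProduct_mulVec_comm (hA : A.IsSymm) (x y : V → ℝ) :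
    x ⬝ᵥ A *ᵥ y = y ⬝ᵥ A *ᵥ x := by
  rw [dotProduct_mulVec, dotProduct_comm, ← mulVec_transpose, hA.eq]

theorem IsSymm.dotProduct_mulVec_add_smul (hA : A.IsSymm) (x d : V → ℝ) (t : ℝ) :
    (x + t • d) ⬝ᵥ A *ᵥ (x + t • d) =
      x ⬝ᵥ A *ᵥ x + 2 * t * (d ⬝ᵥ A *ᵥ x) + t ^ 2 * (d ⬝ᵥ A *ᵥ d) := by
  simp only [mulVec_add, mulVec_smul, add_dotProduct, dotProduct_add, smul_dotProduct,
    dotProduct_smul, smul_eq_mul, hA.dotProduct_mulVec_comm x d]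
  ring

variable [DecidableEq V] {x : V → ℝ}

theorem IsSymm.dotProduct_mulVec_le_mulVec_apply_of_isMinOn (hA : A.IsSymm)
    (hx : x ∈ stdSimplex ℝ V) (hmin : IsMinOn (fun y => y ⬝ᵥ A *ᵥ y) (stdSimplex ℝ V) x)
    (v : V) : x ⬝ᵥ A *ᵥ x ≤ (A *ᵥ x) v := by
  set d := Pi.single v 1 - x
  suffices 0 ≤ d ⬝ᵥ A *ᵥ x by
    simpa [d, sub_dotProduct, single_one_dotProduct] using this
  refine nonneg_of_forall_Ioc_nonneg_add_mul (c := (d ⬝ᵥ A *ᵥ d) / 2) fun t ht => ?_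
  have hmem : x + t • d ∈ stdSimplex ℝ V :=
    (convex_stdSimplex ℝ V).add_smul_sub_mem hx (single_mem_stdSimplex ℝ v)
      (Set.Ioc_subset_Icc_self ht)
  have hle : x ⬝ᵥ A *ᵥ x ≤ (x + t • d) ⬝ᵥ A *ᵥ (x + t • d) := hmin hmem
  rw [hA.dotProduct_mulVec_add_smul] at hle
  nlinarith [ht.1]

theorem IsSymm.mulVec_apply_eq_of_isMinOn (hA : A.IsSymm)
    (hx : x ∈ stdSimplex ℝ V) (hmin : IsMinOn (fun y => y ⬝ᵥ A *ᵥ y) (stdSimplex ℝ V) x)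
    (hpos : ∀ v, 0 < x v) (v : V) : (A *ᵥ x) v = x ⬝ᵥ A *ᵥ x := by
  have hle := hA.dotProduct_mulVec_le_mulVec_apply_of_isMinOn hx hmin
  have hsum : ∑ w, x w * (x ⬝ᵥ A *ᵥ x) = ∑ w, x w * (A *ᵥ x) w := by
    rw [← sum_mul, hx.2, one_mul]
    rfl
  have hv := (sum_eq_sum_iff_of_le fun w _ =>
    mul_le_mul_of_nonneg_left (hle w) (hpos w).le).1 hsum v (mem_univ v)
  exact (mul_left_cancel₀ (hpos v).ne' hv).symm

end Matrix

namespace CRG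

open Finset Matrix

variable {V : Type} [Fintype V] [DecidableEq V]

theorem M_comm (K : CRG V) (p : ℝ) (u v : V) : K.M p u v = K.M p v u := by
  unfold M
  rcases eq_or_ne u v with rfl | huv
  · rfl
  · simp [huv, huv.symm, K.ecolor_symm u v]

theorem isSymm_of_M (K : CRG V) (p : ℝ) : (Matrix.of (K.M p)).IsSymm :=
  IsSymm.ext fun u v => K.M_comm p v u

theorem M_nonneg (K : CRG V) {p : ℝ} (hp : p ∈ Set.Icc (0 : ℝ) 1) (u v : V) :
    0 ≤ K.M p u v := by
  have hp' : 0 ≤ 1 - p := sub_nonneg.2 hp.2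
  unfold M
  split_ifs
  · exact hp.1
  · exact hp'
  · cases K.ecolor u v <;> simp [hp.1, hp']

theorem sub_M (K : CRG V) (p : ℝ) (s : Finset V) (u w : s) :
    (K.sub s).M p u w = K.M p u w := by
  unfold M
  simp only [sub, Subtype.ext_iff]
  congr

theorem sum_sum_M_eq_dotProduct_mulVec (K : CRG V) (p : ℝ) (x : V → ℝ) :
    ∑ u, ∑ v, x u * K.M p u v * x v = x ⬝ᵥ Matrix.of (K.M p) *ᵥ x := by
  simp only [dotProduct, mulVec, of_apply, mul_sum, mul_assoc]

theorem M_apply_mul_eq (K : CRG V) (p : ℝ) (x : V → ℝ) (v w : V) :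
    K.M p v w * x w =
      p * (if w ≠ v ∧ K.ecolor v w = .white then x w else 0) +
        (1 - p) * (if w ≠ v ∧ K.ecolor v w = .black then x w else 0) +
        if w = v then (if K.vWhite v then p else 1 - p) * x v else 0 := by
  unfold M
  rcases eq_or_ne w v with rfl | hwv
  · simp
  · rcases K.ecolor v w <;> simp [hwv, hwv.symm]

theorem sum_M_mul_eq (K : CRG V) (p : ℝ) (x : V → ℝ) (v : V) :
    ∑ w, K.M p v w * x w = p * K.dW x v + (1 - p) * K.dB x v := by
  simp only [K.M_apply_mul_eq, dW, dB, sum_filter, sum_add_distrib, ← mul_sum, sum_ite_eq',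
    mem_univ, if_true]
  cases K.vWhite v <;> simp <;> ring

variable {p : ℝ}

theorem g_le_of_mem_stdSimplex (K : CRG V) (hp : p ∈ Set.Icc (0 : ℝ) 1) {y : V → ℝ}
    (hy : y ∈ stdSimplex ℝ V) :
    K.g p ≤ ∑ u, ∑ v, y u * K.M p u v * y v := by
  refine csInf_le ⟨0, ?_⟩ ⟨y, hy.1, hy.2, rfl⟩
  rintro r ⟨z, hz, -, rfl⟩
  exact sum_nonneg fun u _ => sum_nonneg fun v _ =>
    mul_nonneg (mul_nonneg (hz u) (K.M_nonneg hp u v)) (hz v)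

theorem g_sub_le_of_forall_notMem_eq_zero (K : CRG V) (hp : p ∈ Set.Icc (0 : ℝ) 1)
    {s : Finset V} {x : V → ℝ} (hx : x ∈ stdSimplex ℝ V) (hs : ∀ w ∉ s, x w = 0) :
    (K.sub s).g p ≤ ∑ u, ∑ v, x u * K.M p u v * x v := by
  have hsum {f : V → ℝ} (hf : ∀ w ∉ s, f w = 0) : ∑ w : s, f w = ∑ w, f w := by
    rw [sum_coe_sort]
    exact sum_subset (subset_univ s) fun w _ hw => hf w hw
  have hy : (fun w : s => x w) ∈ stdSimplex ℝ s := ⟨fun w => hx.1 w, by rw [hsum hs, hx.2]⟩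
  calc (K.sub s).g p ≤ ∑ u : s, ∑ v : s, x u * (K.sub s).M p u v * x v :=
        (K.sub s).g_le_of_mem_stdSimplex hp hy
    _ = ∑ u : s, ∑ v, x u * K.M p u v * x v := sum_congr rfl fun u _ => by
      simp only [sub_M]
      exact hsum (f := fun v => x u * K.M p u v * x v) fun v hv => by simp [hs v hv]
    _ = ∑ u, ∑ v, x u * K.M p u v * x v :=
      hsum (f := fun u => ∑ v, x u * K.M p u v * x v) fun u hu => by simp [hs u hu]

theorem IsOptWeight.isMinOn {K : CRG V} (hp : p ∈ Set.Icc (0 : ℝ) 1) {x : V → ℝ}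
    (hx : K.IsOptWeight p x) :
    IsMinOn (fun y => y ⬝ᵥ Matrix.of (K.M p) *ᵥ y) (stdSimplex ℝ V) x := by
  refine isMinOn_iff.2 fun y hy => ?_
  simpa only [← sum_sum_M_eq_dotProduct_mulVec, hx.2.2] using K.g_le_of_mem_stdSimplex hp hy

theorem IsOptWeight.pos {K : CRG V} (hp : p ∈ Set.Icc (0 : ℝ) 1) (hcore : K.IsPCore p)
    {x : V → ℝ} (hx : K.IsOptWeight p x) (v : V) : 0 < x v := by
  refine (hx.1 v).lt_of_ne fun hxv => ?_
  set s := univ.filter fun w => x w ≠ 0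
  have hs : ∀ w ∉ s, x w = 0 := by simp [s]
  have hne : s.Nonempty := by
    obtain ⟨w, -, hw⟩ := exists_ne_zero_of_sum_ne_zero (hx.2.1 ▸ one_ne_zero)
    exact ⟨w, mem_filter.2 ⟨mem_univ w, hw⟩⟩
  have hproper : s ≠ univ := fun h => by
    have hvs : v ∈ s := h ▸ mem_univ v
    exact (mem_filter.1 hvs).2 hxv.symm
  have hle := (K.g_sub_le_of_forall_notMem_eq_zero hp ⟨hx.1, hx.2.1⟩ hs).trans_eq hx.2.2
  exact (hcore s hne hproper).not_ge hle

end CRG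

theorem pcore_localization_degrees_general {V : Type} [Fintype V] [DecidableEq V]
    (p : ℝ) (hp : p ∈ Set.Ioo (0 : ℝ) 1) (K : CRG V) (hcore : K.IsPCore p)
    (x : V → ℝ) (hx : K.IsOptWeight p x) :
    ∀ v : V, K.g p = p * K.dW x v + (1 - p) * K.dB x v := by
  intro v
  have hp' := Set.Ioo_subset_Icc_self hp
  rw [← K.sum_M_mul_eq, ← hx.2.2, K.sum_sum_M_eq_dotProduct_mulVec]
  exact ((K.isSymm_of_M p).mulVec_apply_eq_of_isMinOn ⟨hx.1, hx.2.1⟩ (hx.isMinOn hp')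
    (hx.pos hp' hcore) v).symm

theorem pcore_localization_degrees {V : Type} [Fintype V] [DecidableEq V] [Nonempty V]
    (p : ℝ) (hp : p ∈ Set.Ioo (0 : ℝ) 1) (K : CRG V) (hcore : K.IsPCore p)
    (x : V → ℝ) (hx : K.IsOptWeight p x) :
    ∀ v : V, K.g p = p * K.dW x v + (1 - p) * K.dB x v :=
  pcore_localization_degrees_general p hp K hcore x hx
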